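/- arXiv:0911.3919 — 4 statements merged into one kernel-verified Lean document; each statement's English description precedes it below -/
import Mathlib

section
/- Let x₀ ∈ C° and x ∈ C. Then for every w ∈ W one has ‖x₀ − w x‖ ≥ ‖x₀ − x‖ (equivalently, ⟪x₀, w x⟫ ≤ ⟪x₀, x⟫), and the inequality is strict for every w ∈ W with w x ≠ x. -/
/-!
For `p` off the mirrors, the open chamber of `p` is cut out by the half-spaces
`0 < ⟪p - g p, ·⟫`, `g` running over the reflections of `W`; the chamber `C` is the closed
chamber of any point of `C°`. For `z` in the open chamber of `p`, a point of the orbit `W z`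
maximizing `⟪p, ·⟫` is not increased by any reflection, so lies in the closed chamber; being off
the mirrors, it lies in the open chamber, and the disjointness of the translates of `C°` makes it
`z` itself. By continuity `⟪p, w x⟫ ≤ ⟪p, x⟫` for all `x ∈ C`, which is the distance inequality
since `‖w x‖ = ‖x‖`. If equality holds at `x₀`, the linear form `⟪·, x - w x⟫` is nonnegative on
`C°` and vanishes at the interior point `x₀`, so `w x = x`.
-/

open scoped RealInnerProductSpace

noncomputable section

/-- `g` is the orthogonal reflection in the linear hyperplane orthogonal to some
nonzero vector `u`. -/
def IsLinRefl {V : Type*} [NormedAddCommGroup V] [InnerProductSpace ℝ V]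
    (g : V ≃ₗᵢ[ℝ] V) : Prop :=
  ∃ u : V, u ≠ 0 ∧ ∀ x : V, g x = x - ((2 * ⟪x, u⟫) / ⟪u, u⟫) • u

/-- The union of the reflection hyperplanes (mirrors) of the reflections belonging to `W`;
the mirror of a reflection is exactly its set of fixed points. -/
def mirrors {V : Type*} [NormedAddCommGroup V] [InnerProductSpace ℝ V]
    (W : Subgroup (V ≃ₗᵢ[ℝ] V)) : Set V :=
  ⋃ g ∈ {g : V ≃ₗᵢ[ℝ] V | g ∈ W ∧ IsLinRefl g}, {x : V | g x = x}

/-- `C` is a fundamental chamber for `W`: the closure of a connected component of the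
complement of the union of the reflection hyperplanes of `W`. -/
def IsChamber {V : Type*} [NormedAddCommGroup V] [InnerProductSpace ℝ V]
    (W : Subgroup (V ≃ₗᵢ[ℝ] V)) (C : Set V) : Prop :=
  ∃ x₀ ∈ (mirrors W)ᶜ, C = closure (connectedComponentIn (mirrors W)ᶜ x₀)

open Set Filter Topology

section

variable {V : Type*} [NormedAddCommGroup V] [InnerProductSpace ℝ V]

theorem norm_sub_le_norm_sub_iff_inner_le {a x y : V} (h : ‖x‖ = ‖y‖) :
    ‖a - x‖ ≤ ‖a - y‖ ↔ ⟪a, y⟫ ≤ ⟪a, x⟫ := by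
  rw [← sq_le_sq₀ (norm_nonneg _) (norm_nonneg _), norm_sub_sq_real, norm_sub_sq_real, h]
  constructor <;> intro <;> linarith

theorem norm_sub_lt_norm_sub_iff_inner_lt {a x y : V} (h : ‖x‖ = ‖y‖) :
    ‖a - x‖ < ‖a - y‖ ↔ ⟪a, y⟫ < ⟪a, x⟫ := by
  rw [← sq_lt_sq₀ (norm_nonneg _) (norm_nonneg _), norm_sub_sq_real, norm_sub_sq_real, h]
  constructor <;> intro <;> linarith

theorem inner_sub_map_self_pos (g : V ≃ₗᵢ[ℝ] V) {p : V} (hp : g p ≠ p) :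
    0 < ⟪p - g p, p⟫ := by
  have h : ‖p - g p‖ ^ 2 = 2 * ⟪p - g p, p⟫ := by
    rw [norm_sub_sq_real, g.norm_map, inner_sub_left, real_inner_comm, real_inner_self_eq_norm_sq]
    ring
  have : 0 < ‖p - g p‖ := norm_pos_iff.2 (sub_ne_zero.2 hp.symm)
  nlinarith

theorem eq_zero_of_eventually_inner_le {d y : V} (h : ∀ᶠ z in 𝓝 y, ⟪d, y⟫ ≤ ⟪d, z⟫) :
    d = 0 := by
  have hmin : IsLocalMin (innerSL ℝ d) y := h
  have hd : innerSL ℝ d = 0 := hmin.hasFDerivAt_eq_zero (innerSL ℝ d).hasFDerivAt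
  simpa using congrArg (fun f => f d) hd

namespace IsLinRefl

variable {g : V ≃ₗᵢ[ℝ] V}

theorem inner_map_left (hg : IsLinRefl g) (x y : V) : ⟪g x, y⟫ = ⟪x, g y⟫ := by
  obtain ⟨u, -, hgu⟩ := hg
  rw [hgu, hgu, inner_sub_left, inner_sub_right, real_inner_smul_left, real_inner_smul_right,
    real_inner_comm u y]
  ring

theorem apply_eq_self_of_inner_eq_zero (hg : IsLinRefl g) {p y : V} (hp : g p ≠ p)
    (h : ⟪p - g p, y⟫ = 0) : g y = y := by
  obtain ⟨u, -, hgu⟩ := hg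
  have hc : 2 * ⟪p, u⟫ / ⟪u, u⟫ ≠ 0 := fun hc => hp (by rw [hgu, hc, zero_smul, sub_zero])
  rw [hgu p, sub_sub_cancel, real_inner_smul_left] at h
  rw [hgu, real_inner_comm u y, (mul_eq_zero.1 h).resolve_left hc]
  simp

theorem conj (hg : IsLinRefl g) (w : V ≃ₗᵢ[ℝ] V) : IsLinRefl (w * g * w⁻¹) := by
  obtain ⟨u, hu, hgu⟩ := hg
  refine ⟨w u, by simpa using hu, fun x => ?_⟩
  have hx : w (w⁻¹ x) = x := w.apply_symm_apply x
  simp only [LinearIsometryEquiv.coe_mul, Function.comp_apply]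
  rw [hgu, map_sub, map_smul, hx, ← w.inner_map_map, hx, w.inner_map_map]

end IsLinRefl

variable {W : Subgroup (V ≃ₗᵢ[ℝ] V)} {p y : V}

variable (W) in
def reflections : Set (V ≃ₗᵢ[ℝ] V) :=
  {g | g ∈ W ∧ IsLinRefl g}

variable (W) in
/-- `p - g p` is a normal of the mirror of `g` pointing towards `p`. -/
def openChamber (p : V) : Set V :=
  ⋂ g ∈ reflections W, {y | 0 < ⟪p - g p, y⟫}

variable (W) in
def closedChamber (p : V) : Set V :=
  ⋂ g ∈ reflections W, {y | 0 ≤ ⟪p - g p, y⟫}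

theorem mem_openChamber : y ∈ openChamber W p ↔ ∀ g ∈ reflections W, 0 < ⟪p - g p, y⟫ :=
  mem_iInter₂

theorem mem_closedChamber : y ∈ closedChamber W p ↔ ∀ g ∈ reflections W, 0 ≤ ⟪p - g p, y⟫ :=
  mem_iInter₂

theorem mem_mirrors : y ∈ mirrors W ↔ ∃ g ∈ reflections W, g y = y :=
  mem_iUnion₂.trans (by simp only [exists_prop]; exact Iff.rfl)

theorem isOpen_openChamber (hfin : (reflections W).Finite) (p : V) :
    IsOpen (openChamber W p) :=
  hfin.isOpen_biInter fun _ _ => isOpen_lt continuous_const (continuous_const.inner continuous_id)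

theorem isClosed_closedChamber (p : V) : IsClosed (closedChamber W p) :=
  isClosed_biInter fun _ _ => isClosed_le continuous_const (continuous_const.inner continuous_id)

theorem convex_openChamber (p : V) : Convex ℝ (openChamber W p) :=
  convex_iInter₂ fun g _ => convex_halfSpace_gt (innerₛₗ ℝ (p - g p)).isLinear 0

theorem openChamber_subset_closedChamber (p : V) : openChamber W p ⊆ closedChamber W p :=
  iInter₂_mono fun _ _ _ h => show (0 : ℝ) ≤ _ from le_of_lt h

theorem mem_openChamber_self (hp : p ∉ mirrors W) : p ∈ openChamber W p :=
  mem_openChamber.2 fun g hg => inner_sub_map_self_pos g fun h => hp (mem_mirrors.2 ⟨g, hg, h⟩)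

theorem openChamber_subset_compl_mirrors (p : V) : openChamber W p ⊆ (mirrors W)ᶜ := by
  intro y hy hyM
  obtain ⟨g, hg, hgy⟩ := mem_mirrors.1 hyM
  have := mem_openChamber.1 hy g hg
  rw [inner_sub_left, hg.2.inner_map_left, hgy, sub_self] at this
  exact lt_irrefl 0 this

theorem mem_openChamber_of_mem_closedChamber (hp : p ∉ mirrors W) (hy : y ∈ closedChamber W p)
    (hyM : y ∉ mirrors W) : y ∈ openChamber W p := by
  refine mem_openChamber.2 fun g hg => (mem_closedChamber.1 hy g hg).lt_of_ne fun h => ?_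
  have hgp : g p ≠ p := fun h => hp (mem_mirrors.2 ⟨g, hg, h⟩)
  exact hyM (mem_mirrors.2 ⟨g, hg, hg.2.apply_eq_self_of_inner_eq_zero hgp h.symm⟩)

theorem map_notMem_mirrors {w : V ≃ₗᵢ[ℝ] V} (hw : w ∈ W) (hy : y ∉ mirrors W) :
    w y ∉ mirrors W := by
  rw [mem_mirrors] at hy ⊢
  rintro ⟨g, hg, hgy⟩
  refine hy ⟨w⁻¹ * g * w, ⟨W.mul_mem (W.mul_mem (W.inv_mem hw) hg.1) hw, ?_⟩, ?_⟩
  · simpa using hg.2.conj w⁻¹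
  · simp [hgy]

theorem connectedComponentIn_eq_openChamber (hfin : (reflections W).Finite)
    (hp : p ∉ mirrors W) : connectedComponentIn (mirrors W)ᶜ p = openChamber W p := by
  refine Subset.antisymm ?_ ((convex_openChamber p).isPreconnected.subset_connectedComponentIn
    (mem_openChamber_self hp) (openChamber_subset_compl_mirrors p))
  -- Within the complement of the mirrors, the open chamber is also relatively closed.
  refine isPreconnected_connectedComponentIn.subset_left_of_subset_union (isOpen_openChamber hfin p)
    (isClosed_closedChamber p).isOpen_compl
    (disjoint_compl_right.mono_left (openChamber_subset_closedChamber p)) (fun y hy => ?_)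
    ⟨p, mem_connectedComponentIn hp, mem_openChamber_self hp⟩
  by_cases hyC : y ∈ closedChamber W p
  · exact Or.inl (mem_openChamber_of_mem_closedChamber hp hyC (connectedComponentIn_subset _ _ hy))
  · exact Or.inr hyC

theorem closure_openChamber (h : (openChamber W p).Nonempty) :
    closure (openChamber W p) = closedChamber W p := by
  refine Subset.antisymm (closure_minimal (openChamber_subset_closedChamber p)
    (isClosed_closedChamber p)) fun y hy => ?_
  obtain ⟨q, hq⟩ := h
  have hseg : openSegment ℝ q y ⊆ openChamber W p := by
    rintro _ ⟨a, b, ha, hb, -, rfl⟩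
    refine mem_openChamber.2 fun g hg => ?_
    rw [inner_add_right, real_inner_smul_right, real_inner_smul_right]
    have := mem_openChamber.1 hq g hg
    have := mem_closedChamber.1 hy g hg
    positivity
  have hy' : y ∈ closure (openSegment ℝ q y) := by
    rw [closure_openSegment]
    exact right_mem_segment ℝ q y
  exact closure_mono hseg hy'

theorem interior_closedChamber (hfin : (reflections W).Finite) (hp : p ∉ mirrors W) :
    interior (closedChamber W p) = openChamber W p := by
  refine Subset.antisymm (fun y hy => ?_) (interior_maximal (openChamber_subset_closedChamber p)
    (isOpen_openChamber hfin p))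
  refine mem_openChamber.2 fun g hg =>
    (mem_closedChamber.1 (interior_subset hy) g hg).lt_of_ne fun h => ?_
  have hgp : g p ≠ p := fun h => hp (mem_mirrors.2 ⟨g, hg, h⟩)
  refine sub_ne_zero.2 hgp.symm (eq_zero_of_eventually_inner_le (y := y) ?_)
  filter_upwards [isOpen_interior.mem_nhds hy] with z hz
  rw [← h]
  exact mem_closedChamber.1 (interior_subset hz) g hg

theorem closure_connectedComponentIn_compl_mirrors (hfin : (reflections W).Finite)
    (hp : p ∉ mirrors W) :
    closure (connectedComponentIn (mirrors W)ᶜ p) = closedChamber W p := by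
  rw [connectedComponentIn_eq_openChamber hfin hp,
    closure_openChamber ⟨p, mem_openChamber_self hp⟩]

theorem IsChamber.eq_closedChamber_of_mem_interior {C : Set V} (hfin : (reflections W).Finite)
    (hC : IsChamber W C) {q : V} (hq : q ∈ interior C) :
    C = closedChamber W q ∧ interior C = openChamber W q := by
  obtain ⟨p, hp, rfl⟩ := hC
  rw [closure_connectedComponentIn_compl_mirrors hfin hp, interior_closedChamber hfin hp,
    ← connectedComponentIn_eq_openChamber hfin hp] at hq
  have hqM : q ∉ mirrors W := connectedComponentIn_subset _ _ hq
  rw [connectedComponentIn_eq hq, closure_connectedComponentIn_compl_mirrors hfin hqM,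
    interior_closedChamber hfin hqM]
  exact ⟨rfl, rfl⟩

theorem inner_map_le_of_mem_openChamber (hWfin : (W : Set (V ≃ₗᵢ[ℝ] V)).Finite)
    (hp : p ∉ mirrors W)
    (hfree : ∀ w ∈ W, ∀ y ∈ openChamber W p, w y ∈ openChamber W p → w = 1)
    {z : V} (hz : z ∈ openChamber W p) {w : V ≃ₗᵢ[ℝ] V} (hw : w ∈ W) :
    ⟪p, w z⟫ ≤ ⟪p, z⟫ := by
  obtain ⟨_, ⟨w₀, hw₀, rfl⟩, hmax⟩ := exists_max_image ((fun g : V ≃ₗᵢ[ℝ] V => g z) '' W)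
    (fun v => ⟪p, v⟫) (hWfin.image _) ⟨z, 1, W.one_mem, rfl⟩
  have hclosed : w₀ z ∈ closedChamber W p := by
    refine mem_closedChamber.2 fun g hg => ?_
    have := hmax (g (w₀ z)) ⟨g * w₀, W.mul_mem hg.1 hw₀, rfl⟩
    rw [inner_sub_left, hg.2.inner_map_left]
    linarith
  have hw₀1 : w₀ = 1 := hfree w₀ hw₀ z hz (mem_openChamber_of_mem_closedChamber hp hclosed
    (map_notMem_mirrors hw₀ (openChamber_subset_compl_mirrors p hz)))
  simpa [hw₀1] using hmax (w z) ⟨w, hw, rfl⟩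

theorem inner_map_le_of_mem_closedChamber (hWfin : (W : Set (V ≃ₗᵢ[ℝ] V)).Finite)
    (hp : p ∉ mirrors W)
    (hfree : ∀ w ∈ W, ∀ y ∈ openChamber W p, w y ∈ openChamber W p → w = 1)
    {x : V} (hx : x ∈ closedChamber W p) {w : V ≃ₗᵢ[ℝ] V} (hw : w ∈ W) :
    ⟪p, w x⟫ ≤ ⟪p, x⟫ := by
  rw [← closure_openChamber ⟨p, mem_openChamber_self hp⟩] at hx
  have hclosed : IsClosed {z | ⟪p, w z⟫ ≤ ⟪p, z⟫} :=
    isClosed_le (continuous_const.inner w.continuous) (continuous_const.inner continuous_id)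
  exact closure_minimal (fun z hz => inner_map_le_of_mem_openChamber hWfin hp hfree hz hw)
    hclosed hx

end

theorem dist_le_orbit_dist_general {V : Type*} [NormedAddCommGroup V] [InnerProductSpace ℝ V]
    (W : Subgroup (V ≃ₗᵢ[ℝ] V)) (C : Set V)
    (hWfin : (W : Set (V ≃ₗᵢ[ℝ] V)).Finite)
    (hC : IsChamber W C)
    (hdisj : ∀ w ∈ W, ∀ w' ∈ W, w ≠ w' →
      ∀ x ∈ interior C, ∀ x' ∈ interior C, w x ≠ w' x')
    (x₀ x : V) (hx₀ : x₀ ∈ interior C) (hx : x ∈ C) :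
    (∀ w ∈ W, ‖x₀ - x‖ ≤ ‖x₀ - w x‖) ∧
    (∀ w ∈ W, w x ≠ x → ‖x₀ - x‖ < ‖x₀ - w x‖) := by
  have hfin : (reflections W).Finite := hWfin.subset fun _ hg => hg.1
  have key : ∀ q ∈ interior C, ∀ w ∈ W, ⟪q, w x⟫ ≤ ⟪q, x⟫ := by
    intro q hq w hw
    obtain ⟨hCq, hintq⟩ := hC.eq_closedChamber_of_mem_interior hfin hq
    refine inner_map_le_of_mem_closedChamber hWfin
      (openChamber_subset_compl_mirrors q (hintq ▸ hq)) (fun w hw y hy hwy => ?_) (hCq ▸ hx) hw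
    by_contra hne
    rw [← hintq] at hy hwy
    exact hdisj w hw 1 W.one_mem hne y hy (w y) hwy rfl
  refine ⟨fun w hw => (norm_sub_le_norm_sub_iff_inner_le (w.norm_map x).symm).2 (key x₀ hx₀ w hw),
    fun w hw hne => (norm_sub_lt_norm_sub_iff_inner_lt (w.norm_map x).symm).2 <|
      (key x₀ hx₀ w hw).lt_of_ne fun heq => hne ?_⟩
  refine (sub_eq_zero.1 (eq_zero_of_eventually_inner_le (y := x₀) ?_)).symm
  filter_upwards [isOpen_interior.mem_nhds hx₀] with q hq
  rw [real_inner_comm x₀, real_inner_comm q, inner_sub_right, inner_sub_right, heq, sub_self,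
    sub_nonneg]
  exact key q hq w hw

/-- For `x₀ ∈ C°` and `x ∈ C`, every `w ∈ W` satisfies `‖x₀ - w x‖ ≥ ‖x₀ - x‖`, with strict
inequality whenever `w x ≠ x`. -/
theorem dist_le_orbit_dist {V : Type*} [NormedAddCommGroup V] [InnerProductSpace ℝ V]
    [FiniteDimensional ℝ V]
    (W : Subgroup (V ≃ₗᵢ[ℝ] V)) (C : Set V)
    (hWfin : (W : Set (V ≃ₗᵢ[ℝ] V)).Finite)
    (hWgen : Subgroup.closure {g : V ≃ₗᵢ[ℝ] V | g ∈ W ∧ IsLinRefl g} = W)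
    (hC : IsChamber W C)
    (hcover : ∀ v : V, ∃ w ∈ W, ∃ x ∈ C, w x = v)
    (hdisj : ∀ w ∈ W, ∀ w' ∈ W, w ≠ w' →
      ∀ x ∈ interior C, ∀ x' ∈ interior C, w x ≠ w' x')
    (x₀ x : V) (hx₀ : x₀ ∈ interior C) (hx : x ∈ C) :
    (∀ w ∈ W, ‖x₀ - x‖ ≤ ‖x₀ - w x‖) ∧
    (∀ w ∈ W, w x ≠ x → ‖x₀ - x‖ < ‖x₀ - w x‖) :=
  dist_le_orbit_dist_general W C hWfin hC hdisj x₀ x hx₀ hx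
end
end

section
/- Let g be an orthogonal transformation of V and let s be the orthogonal reflection in a linear hyperplane of V. Then the dimensions of the fixed spaces of g and of g∘s differ exactly by 1: |dim ker(1 − g) − dim ker(1 − g∘s)| = 1. -/
open scoped RealInnerProductSpace

noncomputable section

/-- The endomorphism `1 - w` of `V`. -/
def oneSub {V : Type*} [NormedAddCommGroup V] [InnerProductSpace ℝ V]
    (w : V ≃ₗᵢ[ℝ] V) : V →ₗ[ℝ] V :=
  LinearMap.id - (w.toLinearEquiv : V →ₗ[ℝ] V)

/-!
Let `s` be the reflection in the mirror `H = (ℝ ∙ u)ᗮ`. Since `s` fixes `H` pointwise, the fixed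
spaces of `g` and `g * s` have the same intersection with `H`, and a subspace not contained in
the hyperplane `H` meets it in codimension one. So it suffices that exactly one of the two fixed
spaces lies in `H`. They cannot both leave `H`: for `x` fixed by `g` and `y` fixed by `g * s`,
`⟪y - s y, x⟫ = ⟪y, x⟫ - ⟪g (s y), g x⟫ = 0`, and `y - s y` is a multiple of `u`. They cannot
both lie in `H`: then `u ⊥ ker (1 - g) = ker (1 - g⁻¹)`, so `u = w - g⁻¹ w` for some `w`, and
`‖g⁻¹ w‖ = ‖w‖` gives `2 ⟪w, u⟫ = ⟪u, u⟫`, whence `s w = g⁻¹ w`: `w` is fixed by `g * s` but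
not orthogonal to `u`.
-/

namespace oneSub

variable {V : Type*} [NormedAddCommGroup V] [InnerProductSpace ℝ V]

theorem mem_ker {w : V ≃ₗᵢ[ℝ] V} {x : V} : x ∈ LinearMap.ker (oneSub w) ↔ w x = x := by
  rw [LinearMap.mem_ker, oneSub, LinearMap.sub_apply, sub_eq_zero, eq_comm]
  rfl

theorem ker_inv (w : V ≃ₗᵢ[ℝ] V) : LinearMap.ker (oneSub w⁻¹) = LinearMap.ker (oneSub w) := by
  ext x
  rw [mem_ker, mem_ker]
  exact w.symm_apply_eq.trans eq_comm

theorem range_eq_orthogonal_ker [FiniteDimensional ℝ V] (w : V ≃ₗᵢ[ℝ] V) :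
    LinearMap.range (oneSub w) = (LinearMap.ker (oneSub w))ᗮ := by
  refine Submodule.eq_of_le_of_finrank_eq ?_ ?_
  · rintro _ ⟨x, rfl⟩
    refine (Submodule.mem_orthogonal _ _).2 fun y hy => ?_
    change ⟪y, x - w x⟫ = 0
    rw [inner_sub_right, ← mem_ker.1 hy, w.inner_map_map, mem_ker.1 hy, sub_self]
  · have := LinearMap.finrank_range_add_finrank_ker (oneSub w)
    have := (LinearMap.ker (oneSub w)).finrank_add_finrank_orthogonal
    omega

end oneSub

theorem Submodule.finrank_inf_add_one_of_not_le {K V : Type*} [DivisionRing K] [AddCommGroup V]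
    [Module K V] [FiniteDimensional K V] {H W : Submodule K V}
    (hH : Module.finrank K H + 1 = Module.finrank K V) (hW : ¬ W ≤ H) :
    Module.finrank K ↥(W ⊓ H) + 1 = Module.finrank K W := by
  have hlt : Module.finrank K H < Module.finrank K ↥(W ⊔ H) :=
    Submodule.finrank_lt_finrank_of_lt (lt_of_le_of_ne le_sup_right fun h => hW (h ▸ le_sup_left))
  have hle := (W ⊔ H).finrank_le
  have := Submodule.finrank_sup_add_finrank_inf_eq W H
  omega

section Reflection

variable {V : Type*} [NormedAddCommGroup V] [InnerProductSpace ℝ V] {s : V ≃ₗᵢ[ℝ] V} {u : V}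

theorem apply_eq_self_of_mem_orthogonal_singleton
    (hsu : ∀ x : V, s x = x - ((2 * ⟪x, u⟫) / ⟪u, u⟫) • u) {x : V} (hx : x ∈ (ℝ ∙ u)ᗮ) :
    s x = x := by
  rw [hsu x, Submodule.mem_orthogonal_singleton_iff_inner_left.1 hx, mul_zero, zero_div,
    zero_smul, sub_zero]

theorem ker_oneSub_mul_inf_orthogonal_singleton (g : V ≃ₗᵢ[ℝ] V)
    (hsu : ∀ x : V, s x = x - ((2 * ⟪x, u⟫) / ⟪u, u⟫) • u) :
    LinearMap.ker (oneSub (g * s)) ⊓ (ℝ ∙ u)ᗮ = LinearMap.ker (oneSub g) ⊓ (ℝ ∙ u)ᗮ := by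
  ext x
  simp only [Submodule.mem_inf, oneSub.mem_ker, and_congr_left_iff]
  intro hx
  change g (s x) = x ↔ _
  rw [apply_eq_self_of_mem_orthogonal_singleton hsu hx]

theorem ker_oneSub_mul_le_orthogonal_singleton (g : V ≃ₗᵢ[ℝ] V)
    (hsu : ∀ x : V, s x = x - ((2 * ⟪x, u⟫) / ⟪u, u⟫) • u)
    (hg : ¬ LinearMap.ker (oneSub g) ≤ (ℝ ∙ u)ᗮ) :
    LinearMap.ker (oneSub (g * s)) ≤ (ℝ ∙ u)ᗮ := by
  obtain ⟨x, hx, hxu⟩ := SetLike.not_le_iff_exists.1 hg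
  rw [Submodule.mem_orthogonal_singleton_iff_inner_right] at hxu
  have hu : u ≠ 0 := by rintro rfl; exact hxu (inner_zero_left x)
  intro y hy
  have h : ⟪y - s y, x⟫ = 0 := by
    rw [inner_sub_left, sub_eq_zero]
    nth_rw 1 [← oneSub.mem_ker.1 hy, ← oneSub.mem_ker.1 hx]
    exact g.inner_map_map _ _
  rw [hsu y, sub_sub_cancel, real_inner_smul_left] at h
  simpa [hxu, hu, Submodule.mem_orthogonal_singleton_iff_inner_left] using h

theorem not_ker_oneSub_mul_le_orthogonal_singleton [FiniteDimensional ℝ V] (g : V ≃ₗᵢ[ℝ] V)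
    (hu : u ≠ 0) (hsu : ∀ x : V, s x = x - ((2 * ⟪x, u⟫) / ⟪u, u⟫) • u)
    (hg : LinearMap.ker (oneSub g) ≤ (ℝ ∙ u)ᗮ) :
    ¬ LinearMap.ker (oneSub (g * s)) ≤ (ℝ ∙ u)ᗮ := by
  have hu_range : u ∈ LinearMap.range (oneSub g⁻¹) := by
    rw [oneSub.range_eq_orthogonal_ker, oneSub.ker_inv, Submodule.mem_orthogonal']
    exact fun x hx => Submodule.mem_orthogonal_singleton_iff_inner_right.1 (hg hx)
  obtain ⟨w, hw⟩ := hu_range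
  change w - g⁻¹ w = u at hw
  have hwu : 2 * ⟪w, u⟫ = ⟪u, u⟫ := by
    rw [← hw, inner_sub_left, inner_sub_right, inner_sub_right, (g⁻¹).inner_map_map,
      real_inner_comm (g⁻¹ w) w]
    ring
  have hsw : s w = g⁻¹ w := by
    rw [hsu w, hwu, div_self (inner_self_ne_zero.2 hu), one_smul, ← hw, sub_sub_cancel]
  intro hle
  have hw_fixed : w ∈ LinearMap.ker (oneSub (g * s)) := by
    rw [oneSub.mem_ker]
    change g (s w) = w
    rw [hsw, LinearIsometryEquiv.coe_inv, LinearIsometryEquiv.apply_symm_apply]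
  rw [Submodule.mem_orthogonal_singleton_iff_inner_left.1 (hle hw_fixed), mul_zero] at hwu
  exact hu (inner_self_eq_zero.1 hwu.symm)

end Reflection

/-- For an orthogonal transformation `g` and a hyperplane reflection `s`, the dimensions of
the fixed-point spaces of `g` and of `g ∘ s` differ exactly by `1`. -/
theorem finrank_fixed_space_mul_reflection {V : Type*} [NormedAddCommGroup V]
    [InnerProductSpace ℝ V] [FiniteDimensional ℝ V]
    (g s : V ≃ₗᵢ[ℝ] V) (hs : IsLinRefl s) :
    ((Module.finrank ℝ (LinearMap.ker (oneSub g)) : ℤ) -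
      (Module.finrank ℝ (LinearMap.ker (oneSub (g * s))) : ℤ)).natAbs = 1 := by
  obtain ⟨u, hu, hsu⟩ := hs
  have hH : Module.finrank ℝ (ℝ ∙ u)ᗮ + 1 = Module.finrank ℝ V := by
    rw [← finrank_span_singleton (K := ℝ) hu, add_comm]
    exact (ℝ ∙ u).finrank_add_finrank_orthogonal
  have hinf := ker_oneSub_mul_inf_orthogonal_singleton g hsu
  by_cases hg : LinearMap.ker (oneSub g) ≤ (ℝ ∙ u)ᗮ
  · have h := Submodule.finrank_inf_add_one_of_not_le hH
      (not_ker_oneSub_mul_le_orthogonal_singleton g hu hsu hg)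
    rw [hinf, inf_eq_left.2 hg] at h
    omega
  · have h := Submodule.finrank_inf_add_one_of_not_le hH hg
    rw [← hinf, inf_eq_left.2 (ker_oneSub_mul_le_orthogonal_singleton g hsu hg)] at h
    omega
end
end

section
/- Let w ∈ W_reg, so that w⁻¹ − 1 is invertible, and for u ∈ V set v_u := (w⁻¹ − 1)⁻¹ u. Then: (1) for all u, r ∈ V, ⟪v_u, r⟫ + ⟪v_r, u⟫ = −⟪u, r⟫; (2) for all u ∈ V, ⟪v_u, u⟫ = −⟪u, u⟫/2; (3) for all u ≠ 0, v_u = w (s_u v_u), where s_u is the orthogonal reflection in the hyperplane H_u = u^⊥; (4) for all u ≠ 0, v_u is orthogonal to (1 − w)H_u = {x − w x : x ∈ H_u}; (5) for all u ≠ 0, ker(1 − w∘s_u) is the line ℝ·v_u spanned by v_u. -/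
open scoped RealInnerProductSpace

noncomputable section

/-!
The map `v = (w⁻¹ - 1)⁻¹` (the resolvent of `w⁻¹` at `1`) satisfies `w⁻¹ (v u) = v u + u`.
Since `w` is an isometry, `⟪v u + u, v r + r⟫ = ⟪v u, v r⟫`, which expands to
`⟪v u, r⟫ + ⟪v r, u⟫ = -⟪u, r⟫`; on the diagonal, `⟪v u, u⟫ = -⟪u, u⟫ / 2`.
The latter says exactly that the reflection `s_u` sends `v u` to `v u + u`, which `w` sends back
to `v u`, so the line `ℝ ∙ v u` is fixed by `w ∘ s_u`. Conversely, if `w (s_u x) = x` with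
`s_u x = x - c • u`, then `x + c • v u` is fixed by `w`, hence zero when `w` is regular.
-/

namespace LinearIsometryEquiv

variable {V : Type*} [NormedAddCommGroup V] [InnerProductSpace ℝ V]
  {w : V ≃ₗᵢ[ℝ] V} {v : V → V}

theorem apply_resolvent_add_self (hv : ∀ u, w.symm (v u) - v u = u) (u : V) :
    w (v u + u) = v u := by
  rw [← sub_eq_iff_eq_add'.mp (hv u), apply_symm_apply]

theorem inner_resolvent_add_inner_resolvent (hv : ∀ u, w.symm (v u) - v u = u) (u r : V) :
    ⟪v u, r⟫ + ⟪v r, u⟫ = -⟪u, r⟫ := by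
  have hiso : ⟪v u + u, v r + r⟫ = ⟪v u, v r⟫ := by
    rw [← w.inner_map_map, apply_resolvent_add_self hv, apply_resolvent_add_self hv]
  simp only [inner_add_left, inner_add_right] at hiso
  linarith [real_inner_comm u (v r)]

theorem inner_resolvent_self (hv : ∀ u, w.symm (v u) - v u = u) (u : V) :
    ⟪v u, u⟫ = -(⟪u, u⟫ / 2) := by
  linarith [inner_resolvent_add_inner_resolvent hv u u]

theorem reflection_coeff_smul_resolvent (hv : ∀ u, w.symm (v u) - v u = u) {u : V} (hu : u ≠ 0)
    (t : ℝ) : (2 * ⟪t • v u, u⟫) / ⟪u, u⟫ = -t := by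
  have hne : ⟪u, u⟫ ≠ 0 := inner_self_ne_zero.mpr hu
  rw [real_inner_smul_left, inner_resolvent_self hv]
  field_simp

theorem apply_reflection_smul_resolvent (hv : ∀ u, w.symm (v u) - v u = u) {u : V} (hu : u ≠ 0)
    (t : ℝ) : w (t • v u - ((2 * ⟪t • v u, u⟫) / ⟪u, u⟫) • u) = t • v u := by
  rw [reflection_coeff_smul_resolvent hv hu, neg_smul, sub_neg_eq_add, ← smul_add, map_smul,
    apply_resolvent_add_self hv]

theorem inner_resolvent_sub_apply (hv : ∀ u, w.symm (v u) - v u = u) (u x : V) :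
    ⟪v u, x - w x⟫ = -⟪u, x⟫ := by
  have hiso : ⟪v u + u, x⟫ = ⟪v u, w x⟫ := by
    rw [← w.inner_map_map, apply_resolvent_add_self hv]
  rw [inner_sub_right, ← hiso, inner_add_left]
  ring

theorem exists_eq_smul_resolvent_of_apply_reflection_eq (hv : ∀ u, w.symm (v u) - v u = u)
    (hwreg : ∀ x, w x = x → x = 0) {u x : V} (hx : w (x - ((2 * ⟪x, u⟫) / ⟪u, u⟫) • u) = x) :
    ∃ t : ℝ, x = t • v u := by
  set c := (2 * ⟪x, u⟫) / ⟪u, u⟫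
  have hwx : w x = x + c • w u := by
    rw [map_sub, map_smul] at hx
    exact sub_eq_iff_eq_add.mp hx
  have hwv : w (v u) = v u - w u := by
    rw [eq_sub_iff_add_eq, ← map_add, apply_resolvent_add_self hv]
  refine ⟨-c, sub_eq_zero.mp (hwreg _ ?_)⟩
  rw [map_sub, map_smul, hwx, hwv]
  module

end LinearIsometryEquiv

theorem v_u_properties_general {V : Type*} [NormedAddCommGroup V] [InnerProductSpace ℝ V]
    (w : V ≃ₗᵢ[ℝ] V) (hwreg : ∀ x : V, w x = x → x = 0)
    (v : V → V) (hv : ∀ u : V, w.symm (v u) - v u = u) :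
    (∀ u r : V, ⟪v u, r⟫ + ⟪v r, u⟫ = -⟪u, r⟫) ∧
    (∀ u : V, ⟪v u, u⟫ = -(⟪u, u⟫ / 2)) ∧
    (∀ u : V, u ≠ 0 → v u = w (v u - ((2 * ⟪v u, u⟫) / ⟪u, u⟫) • u)) ∧
    (∀ u : V, u ≠ 0 → ∀ x : V, ⟪x, u⟫ = 0 → ⟪v u, x - w x⟫ = 0) ∧
    (∀ u : V, u ≠ 0 → ∀ x : V,
      (w (x - ((2 * ⟪x, u⟫) / ⟪u, u⟫) • u) = x ↔ ∃ t : ℝ, x = t • v u)) := by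
  refine ⟨LinearIsometryEquiv.inner_resolvent_add_inner_resolvent hv,
    LinearIsometryEquiv.inner_resolvent_self hv, fun u hu => ?_, fun u _ x hx => ?_,
    fun u hu x => ⟨LinearIsometryEquiv.exists_eq_smul_resolvent_of_apply_reflection_eq hv hwreg, ?_⟩⟩
  · simpa only [one_smul] using
      (LinearIsometryEquiv.apply_reflection_smul_resolvent hv hu 1).symm
  · rw [LinearIsometryEquiv.inner_resolvent_sub_apply hv, real_inner_comm, hx, neg_zero]
  · rintro ⟨t, rfl⟩
    exact LinearIsometryEquiv.apply_reflection_smul_resolvent hv hu t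

/-- Properties of the vectors `v_u = (w⁻¹ - 1)⁻¹ u` for a regular element `w` of an
essential finite reflection group `W`. -/
theorem v_u_properties {V : Type*} [NormedAddCommGroup V] [InnerProductSpace ℝ V]
    [FiniteDimensional ℝ V]
    (W : Subgroup (V ≃ₗᵢ[ℝ] V))
    (hWfin : (W : Set (V ≃ₗᵢ[ℝ] V)).Finite)
    (hWgen : Subgroup.closure {g : V ≃ₗᵢ[ℝ] V | g ∈ W ∧ IsLinRefl g} = W)
    (hess : ∀ v : V, (∀ w ∈ W, w v = v) → v = 0)
    (w : V ≃ₗᵢ[ℝ] V) (hw : w ∈ W) (hwreg : ∀ x : V, w x = x → x = 0)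
    (v : V → V) (hv : ∀ u : V, w.symm (v u) - v u = u) :
    (∀ u r : V, ⟪v u, r⟫ + ⟪v r, u⟫ = -⟪u, r⟫) ∧
    (∀ u : V, ⟪v u, u⟫ = -(⟪u, u⟫ / 2)) ∧
    (∀ u : V, u ≠ 0 → v u = w (v u - ((2 * ⟪v u, u⟫) / ⟪u, u⟫) • u)) ∧
    (∀ u : V, u ≠ 0 → ∀ x : V, ⟪x, u⟫ = 0 → ⟪v u, x - w x⟫ = 0) ∧
    (∀ u : V, u ≠ 0 → ∀ x : V,
      (w (x - ((2 * ⟪x, u⟫) / ⟪u, u⟫) • u) = x ↔ ∃ t : ℝ, x = t • v u)) :=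
  v_u_properties_general w hwreg v hv
end
end

section
/- Let w ∈ W_reg and for u ∈ V set v_u := (w⁻¹ − 1)⁻¹ u. Then for every e ∈ Π one has ⟪v_e, (1 − w)π_e⟫ < 0. -/
open scoped RealInnerProductSpace

noncomputable section

/-- `e` is a unit normal to a codimension-one face (wall) of the chamber `C`, lying on the
same side as `C`: `e` is a unit vector, `C` lies in the nonnegative half-space of `e`, the
reflection in the hyperplane `e^⊥` belongs to `W`, and the wall `e^⊥ ∩ C` contains a point
whose only mirror through it is `e^⊥` (so `e^⊥` really spans a facet of `C`). -/
def IsSimpleNormal {V : Type*} [NormedAddCommGroup V] [InnerProductSpace ℝ V]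
    (W : Subgroup (V ≃ₗᵢ[ℝ] V)) (C : Set V) (e : V) : Prop :=
  ‖e‖ = 1 ∧ (∀ y ∈ C, 0 ≤ ⟪y, e⟫) ∧
    (∃ g ∈ W, ∀ x : V, g x = x - (2 * ⟪x, e⟫) • e) ∧
    ∃ x ∈ C, ⟪x, e⟫ = 0 ∧
      ∀ g ∈ W, IsLinRefl g → g x = x → ∀ y : V, g y = y - (2 * ⟪y, e⟫) • e

theorem LinearIsometryEquiv.inner_sub_map_right {𝕜 E : Type*} [RCLike 𝕜]
    [NormedAddCommGroup E] [InnerProductSpace 𝕜 E] (w : E ≃ₗᵢ[𝕜] E) (x y : E) :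
    inner 𝕜 x (y - w y) = inner 𝕜 (x - w.symm x) y := by
  rw [inner_sub_right, inner_sub_left, w.symm.inner_map_eq_flip, w.symm_symm]

theorem inner_v_e_oneSub_pi_e_neg_general {V : Type*} [NormedAddCommGroup V] [InnerProductSpace ℝ V]
    (w : V ≃ₗᵢ[ℝ] V)
    (v : V → V) (hv : ∀ u : V, w.symm (v u) - v u = u)
    (e : V)
    (π : V) (hπe : ⟪π, e⟫ = 1) :
    ⟪v e, π - w π⟫ < 0 := by
  have hve : v e - w.symm (v e) = -e := by
    rw [← neg_sub, hv e]
  calc ⟪v e, π - w π⟫ = ⟪v e - w.symm (v e), π⟫ := w.inner_sub_map_right _ _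
    _ = -⟪π, e⟫ := by rw [hve, inner_neg_left, real_inner_comm]
    _ < 0 := by rw [hπe]; norm_num

/-- For `w ∈ W_reg` and `e ∈ Π` one has `⟪v_e, (1 - w) π_e⟫ < 0`, where
`v_e = (w⁻¹ - 1)⁻¹ e` and `π_e` is the dual basis vector of `e` with respect to the simple
system `Π` of the chamber `C`. -/
theorem inner_v_e_oneSub_pi_e_neg {V : Type*} [NormedAddCommGroup V] [InnerProductSpace ℝ V]
    [FiniteDimensional ℝ V]
    (W : Subgroup (V ≃ₗᵢ[ℝ] V)) (C : Set V)
    (hWfin : (W : Set (V ≃ₗᵢ[ℝ] V)).Finite)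
    (hWgen : Subgroup.closure {g : V ≃ₗᵢ[ℝ] V | g ∈ W ∧ IsLinRefl g} = W)
    (hC : IsChamber W C)
    (hcover : ∀ v : V, ∃ w ∈ W, ∃ x ∈ C, w x = v)
    (hdisj : ∀ w ∈ W, ∀ w' ∈ W, w ≠ w' →
      ∀ x ∈ interior C, ∀ x' ∈ interior C, w x ≠ w' x')
    (hess : ∀ v : V, (∀ w ∈ W, w v = v) → v = 0)
    (w : V ≃ₗᵢ[ℝ] V) (hw : w ∈ W) (hwreg : ∀ x : V, w x = x → x = 0)
    (v : V → V) (hv : ∀ u : V, w.symm (v u) - v u = u)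
    (e : V) (he : IsSimpleNormal W C e)
    (π : V) (hπe : ⟪π, e⟫ = 1)
    (hπ : ∀ f : V, IsSimpleNormal W C f → f ≠ e → ⟪π, f⟫ = 0) :
    ⟪v e, π - w π⟫ < 0 :=
  inner_v_e_oneSub_pi_e_neg_general w v hv e π hπe
end
end
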